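/- arXiv:2408.14633 — 2 statements merged into one kernel-verified Lean document; each statement's English description precedes it below -/
import Mathlib

section
/- In a graph G, the set of all vertices that belong to some maximum independent set induces a 1-extendable subgraph of G. -/
open scoped Classical

variable {V : Type*}

/-- `S` is an independent set of the graph `G`. -/
def IndepF (G : SimpleGraph V) (S : Finset V) : Prop :=
  ∀ u ∈ S, ∀ v ∈ S, ¬ G.Adj u v

/-- The independence number of `G`. -/
noncomputable def alphaN [Fintype V] (G : SimpleGraph V) : ℕ :=
  Finset.univ.powerset.sup fun S => if IndepF G S then S.card else 0

/-- `G` is 1-extendable: every vertex belongs to a maximum independent set. -/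
def OneExt [Fintype V] (G : SimpleGraph V) : Prop :=
  ∀ v : V, ∃ S : Finset V, v ∈ S ∧ IndepF G S ∧ S.card = alphaN G

/-- The 1-extendable chromatic number of `G`. -/
noncomputable def chiOneExt [Fintype V] (G : SimpleGraph V) : ℕ :=
  sInf {k | ∃ c : V → Fin k, ∀ i : Fin k, OneExt (G.induce {v | c v = i})}

/-- The join (complete sum) of two graphs. -/
def gJoin {α β : Type*} (G : SimpleGraph α) (H : SimpleGraph β) : SimpleGraph (α ⊕ β) where
  Adj u v := match u, v with
    | Sum.inl u, Sum.inl v => G.Adj u v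
    | Sum.inr u, Sum.inr v => H.Adj u v
    | Sum.inl _, Sum.inr _ => True
    | Sum.inr _, Sum.inl _ => True
  symm := by constructor; rintro (u|u) (v|v) h <;> simp_all [SimpleGraph.adj_comm]
  loopless := by constructor; rintro (u|u) h <;> simp_all

/- Restricting `G` to a set `W` loses no independent set lying inside `W`, and gains none, so
`G[W]` has the same independence number as `G` once `W` contains one maximum independent set.
If `W` is the union of all maximum independent sets, each of them lies in `W` and is then a
maximum independent set of `G[W]`. -/

section IndependenceNumber

variable [Fintype V] {G : SimpleGraph V}

lemma IndepF.card_le_alphaN {S : Finset V} (h : IndepF G S) : S.card ≤ alphaN G := by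
  have := Finset.le_sup (f := fun S => if IndepF G S then S.card else 0)
    (Finset.mem_powerset.mpr (Finset.subset_univ S))
  simpa [h, alphaN] using this

lemma alphaN_le {n : ℕ} (h : ∀ S : Finset V, IndepF G S → S.card ≤ n) : alphaN G ≤ n :=
  Finset.sup_le fun S _ => by
    split_ifs with hS
    · exact h S hS
    · exact Nat.zero_le n

end IndependenceNumber

section Induce

variable {G : SimpleGraph V} {W : Set V}

lemma IndepF.map_subtype {T : Finset W} (h : IndepF (G.induce W) T) :
    IndepF G (T.map (Function.Embedding.subtype _)) := by
  simp only [IndepF, Finset.mem_map, Function.Embedding.coe_subtype]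
  rintro _ ⟨u, hu, rfl⟩ _ ⟨v, hv, rfl⟩
  exact h u hu v hv

lemma IndepF.subtype {S : Finset V} (h : IndepF G S) :
    IndepF (G.induce W) (S.subtype (· ∈ W)) := by
  intro u hu v hv
  rw [Finset.mem_subtype] at hu hv
  exact h u hu v hv

lemma alphaN_induce_le [Fintype V] [Fintype W] : alphaN (G.induce W) ≤ alphaN G :=
  alphaN_le fun T hT => by simpa using hT.map_subtype.card_le_alphaN

lemma oneExt_induce_of_forall_mem [Fintype V] [Fintype W]
    (hW : ∀ v ∈ W, ∃ S : Finset V, v ∈ S ∧ IndepF G S ∧ S.card = alphaN G ∧ ∀ u ∈ S, u ∈ W) :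
    OneExt (G.induce W) := by
  intro v
  obtain ⟨S, hvS, hS, hcard, hSW⟩ := hW v v.2
  have hcard_subtype : (S.subtype (· ∈ W)).card = alphaN G := by
    rw [Finset.card_subtype, Finset.filter_true_of_mem hSW, hcard]
  have halpha : alphaN (G.induce W) = alphaN G :=
    alphaN_induce_le.antisymm (hcard_subtype ▸ hS.subtype.card_le_alphaN)
  exact ⟨S.subtype (· ∈ W), by simpa using hvS, hS.subtype, hcard_subtype.trans halpha.symm⟩

end Induce

/-- The set of vertices belonging to some maximum independent set induces a
1-extendable subgraph. -/
theorem induce_maxIndep_vertices_oneExt [Fintype V] (G : SimpleGraph V) :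
    OneExt (G.induce {v : V | ∃ S : Finset V, v ∈ S ∧ IndepF G S ∧ S.card = alphaN G}) :=
  oneExt_induce_of_forall_mem fun _ hv => by
    obtain ⟨S, hvS, hS, hcard⟩ := hv
    exact ⟨S, hvS, hS, hcard, fun _ hu => ⟨S, hu, hS, hcard⟩⟩
end

section
/- For every cograph G with at least one vertex, the 1-extendable chromatic number of G is at most log₂(α(G)) + 1. -/
open scoped Classical

variable {V : Type*}

/-- A cograph: a graph with no induced path on four vertices. -/
def IsCograph (G : SimpleGraph V) : Prop :=
  ¬ ∃ f : Fin 4 ↪ V, G.Adj (f 0) (f 1) ∧ G.Adj (f 1) (f 2) ∧ G.Adj (f 2) (f 3) ∧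
      ¬ G.Adj (f 0) (f 2) ∧ ¬ G.Adj (f 0) (f 3) ∧ ¬ G.Adj (f 1) (f 3)

/-!
A cograph on at least two vertices is the disjoint union or the join of two smaller cographs
(Seinsche; proved by adding one vertex at a time, using that complements of cographs are
cographs to reduce to the join case). Along this decomposition,
for every `s ≤ α(G)` there is a 1-extendable induced subgraph `C` with `α(C) = s` and
`α(G - C) ≤ max (α(G) - s) (s - 1)`: for a disjoint union `α` is additive and `s` is shared
between the two sides; for a join `α` is the maximum, and `C` takes a piece with `α = s` from each
side whose `α` is at least `s`. If `2 ^ k ≤ α(G) < 2 ^ (k + 1)`, removing such a `C` with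
`s = 2 ^ k` leaves `α < 2 ^ k`, so `⌊log₂ α(G)⌋ + 1` classes suffice.
-/

open Finset

variable {G : SimpleGraph V}

noncomputable def alphaOn (G : SimpleGraph V) (S : Finset V) : ℕ :=
  S.powerset.sup fun T => if IndepF G T then T.card else 0

def OneExtOn (G : SimpleGraph V) (S : Finset V) : Prop :=
  ∀ v ∈ S, ∃ T ⊆ S, v ∈ T ∧ IndepF G T ∧ T.card = alphaOn G S

theorem IndepF.mono {S T : Finset V} (h : IndepF G T) (hST : S ⊆ T) : IndepF G S :=
  fun u hu v hv => h u (hST hu) v (hST hv)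

theorem indepF_of_card_le_one {S : Finset V} (h : S.card ≤ 1) : IndepF G S := fun u hu v hv =>
  card_le_one.1 h u hu v hv ▸ G.irrefl

theorem card_le_alphaOn {S T : Finset V} (hTS : T ⊆ S) (hT : IndepF G T) :
    T.card ≤ alphaOn G S := by
  have := le_sup (f := fun T => if IndepF G T then T.card else 0) (mem_powerset.2 hTS)
  rwa [if_pos hT] at this

theorem exists_indepF_card_eq_alphaOn (G : SimpleGraph V) (S : Finset V) :
    ∃ T ⊆ S, IndepF G T ∧ T.card = alphaOn G S := by
  obtain ⟨T, hT, hsup⟩ := exists_mem_eq_sup S.powerset (powerset_nonempty S)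
    fun T => if IndepF G T then T.card else 0
  rw [alphaOn, hsup]
  by_cases hI : IndepF G T
  · exact ⟨T, mem_powerset.1 hT, hI, by rw [if_pos hI]⟩
  · exact ⟨∅, empty_subset S, indepF_of_card_le_one (by simp), by rw [if_neg hI, card_empty]⟩

theorem alphaOn_mono {S T : Finset V} (h : S ⊆ T) : alphaOn G S ≤ alphaOn G T := by
  obtain ⟨I, hIS, hI, hcard⟩ := exists_indepF_card_eq_alphaOn G S
  exact hcard ▸ card_le_alphaOn (hIS.trans h) hI

theorem alphaOn_le_card (S : Finset V) : alphaOn G S ≤ S.card := by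
  obtain ⟨I, hIS, -, hcard⟩ := exists_indepF_card_eq_alphaOn G S
  exact hcard ▸ card_le_card hIS

@[simp] theorem alphaOn_empty : alphaOn G ∅ = 0 :=
  Nat.le_zero.1 (alphaOn_le_card ∅)

theorem one_le_alphaOn {S : Finset V} (h : S.Nonempty) : 1 ≤ alphaOn G S := by
  obtain ⟨v, hv⟩ := h
  simpa using card_le_alphaOn (G := G) (singleton_subset_iff.2 hv) (indepF_of_card_le_one (by simp))

theorem alphaOn_eq_card_of_card_le_one {S : Finset V} (h : S.card ≤ 1) : alphaOn G S = S.card :=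
  (alphaOn_le_card S).antisymm (card_le_alphaOn subset_rfl (indepF_of_card_le_one h))

theorem oneExtOn_of_card_le_one {S : Finset V} (h : S.card ≤ 1) : OneExtOn G S := fun _ hv =>
  ⟨S, subset_rfl, hv, indepF_of_card_le_one h, (alphaOn_eq_card_of_card_le_one h).symm⟩

def NoCross (G : SimpleGraph V) (A B : Finset V) : Prop := ∀ a ∈ A, ∀ b ∈ B, ¬ G.Adj a b

def AllCross (G : SimpleGraph V) (A B : Finset V) : Prop := ∀ a ∈ A, ∀ b ∈ B, G.Adj a b

theorem NoCross.mono {A B A' B' : Finset V} (h : NoCross G A B) (hA : A' ⊆ A) (hB : B' ⊆ B) :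
    NoCross G A' B' := fun a ha b hb => h a (hA ha) b (hB hb)

theorem AllCross.mono {A B A' B' : Finset V} (h : AllCross G A B) (hA : A' ⊆ A) (hB : B' ⊆ B) :
    AllCross G A' B' := fun a ha b hb => h a (hA ha) b (hB hb)

theorem NoCross.symm {A B : Finset V} (h : NoCross G A B) : NoCross G B A :=
  fun b hb a ha hba => h a ha b hb hba.symm

theorem AllCross.symm {A B : Finset V} (h : AllCross G A B) : AllCross G B A :=
  fun b hb a ha => (h a ha b hb).symm

theorem AllCross.disjoint {A B : Finset V} (h : AllCross G A B) : Disjoint A B :=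
  disjoint_left.2 fun _ ha hb => G.irrefl (h _ ha _ hb)

theorem noCross_compl_iff {A B : Finset V} (hd : Disjoint A B) :
    NoCross Gᶜ A B ↔ AllCross G A B := by
  refine forall₂_congr fun a ha => forall₂_congr fun b hb => ?_
  have hab : a ≠ b := fun h => disjoint_left.1 hd ha (h ▸ hb)
  simp [hab]

theorem allCross_compl_iff {A B : Finset V} (hd : Disjoint A B) :
    AllCross Gᶜ A B ↔ NoCross G A B := by
  refine forall₂_congr fun a ha => forall₂_congr fun b hb => ?_
  have hab : a ≠ b := fun h => disjoint_left.1 hd ha (h ▸ hb)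
  simp [hab]

theorem IndepF.union_of_noCross {A B : Finset V} (hA : IndepF G A) (hB : IndepF G B)
    (hx : NoCross G A B) : IndepF G (A ∪ B) := by
  intro u hu v hv
  rcases mem_union.1 hu with hu | hu <;> rcases mem_union.1 hv with hv | hv
  exacts [hA u hu v hv, hx u hu v hv, fun h => hx v hv u hu h.symm, hB u hu v hv]

theorem alphaOn_union_of_noCross {A B : Finset V} (hd : Disjoint A B) (hx : NoCross G A B) :
    alphaOn G (A ∪ B) = alphaOn G A + alphaOn G B := by
  refine le_antisymm ?_ ?_
  · obtain ⟨I, hI, hIi, hcard⟩ := exists_indepF_card_eq_alphaOn G (A ∪ B)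
    calc alphaOn G (A ∪ B) = I.card := hcard.symm
      _ ≤ (I ∩ A ∪ I ∩ B).card :=
          card_le_card (inter_union_distrib_left I A B ▸ subset_inter subset_rfl hI)
      _ ≤ (I ∩ A).card + (I ∩ B).card := card_union_le _ _
      _ ≤ alphaOn G A + alphaOn G B :=
          add_le_add (card_le_alphaOn inter_subset_right (hIi.mono inter_subset_left))
            (card_le_alphaOn inter_subset_right (hIi.mono inter_subset_left))
  · obtain ⟨I, hI, hIi, hIcard⟩ := exists_indepF_card_eq_alphaOn G A
    obtain ⟨J, hJ, hJi, hJcard⟩ := exists_indepF_card_eq_alphaOn G B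
    rw [← hIcard, ← hJcard, ← card_union_of_disjoint (hd.mono hI hJ)]
    exact card_le_alphaOn (union_subset_union hI hJ) (hIi.union_of_noCross hJi (hx.mono hI hJ))

theorem OneExtOn.union_of_noCross {A B : Finset V} (hA : OneExtOn G A) (hB : OneExtOn G B)
    (hd : Disjoint A B) (hx : NoCross G A B) : OneExtOn G (A ∪ B) := by
  intro v hv
  wlog hvA : v ∈ A generalizing A B
  · rw [union_comm] at hv ⊢
    exact this hB hA hd.symm hx.symm hv ((mem_union.1 hv).resolve_right hvA)
  obtain ⟨I, hIA, hvI, hI, hIcard⟩ := hA v hvA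
  obtain ⟨J, hJB, hJ, hJcard⟩ := exists_indepF_card_eq_alphaOn G B
  refine ⟨I ∪ J, union_subset_union hIA hJB, mem_union_left J hvI,
    hI.union_of_noCross hJ (hx.mono hIA hJB), ?_⟩
  rw [card_union_of_disjoint (hd.mono hIA hJB), hIcard, hJcard, alphaOn_union_of_noCross hd hx]

theorem IndepF.subset_or_subset_of_allCross {A B I : Finset V} (hI : IndepF G I)
    (hIAB : I ⊆ A ∪ B) (hx : AllCross G A B) : I ⊆ A ∨ I ⊆ B := by
  by_contra! h
  obtain ⟨a, haI, haB⟩ := not_subset.1 h.2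
  obtain ⟨b, hbI, hbA⟩ := not_subset.1 h.1
  exact hI a haI b hbI <|
    hx a ((mem_union.1 (hIAB haI)).resolve_right haB) b ((mem_union.1 (hIAB hbI)).resolve_left hbA)

theorem alphaOn_union_of_allCross {A B : Finset V} (hx : AllCross G A B) :
    alphaOn G (A ∪ B) = max (alphaOn G A) (alphaOn G B) := by
  refine le_antisymm ?_ (max_le (alphaOn_mono subset_union_left) (alphaOn_mono subset_union_right))
  obtain ⟨I, hI, hIi, hcard⟩ := exists_indepF_card_eq_alphaOn G (A ∪ B)
  rw [← hcard]
  rcases hIi.subset_or_subset_of_allCross hI hx with hIA | hIB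
  exacts [le_max_of_le_left (card_le_alphaOn hIA hIi), le_max_of_le_right (card_le_alphaOn hIB hIi)]

theorem OneExtOn.union_of_allCross {A B : Finset V} (hA : OneExtOn G A) (hB : OneExtOn G B)
    (hx : AllCross G A B) (he : alphaOn G A = alphaOn G B) : OneExtOn G (A ∪ B) := by
  have hA' : alphaOn G (A ∪ B) = alphaOn G A := by rw [alphaOn_union_of_allCross hx, he, max_self]
  intro v hv
  rcases mem_union.1 hv with hv | hv
  · obtain ⟨I, hIA, hvI, hI, hIcard⟩ := hA v hv
    exact ⟨I, hIA.trans subset_union_left, hvI, hI, hIcard.trans hA'.symm⟩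
  · obtain ⟨I, hIB, hvI, hI, hIcard⟩ := hB v hv
    exact ⟨I, hIB.trans subset_union_right, hvI, hI, hIcard.trans (hA'.trans he).symm⟩

theorem union_sdiff_union_of_subset {X Y C D : Finset V} (hC : C ⊆ X) (hD : D ⊆ Y)
    (hd : Disjoint X Y) : (X ∪ Y) \ (C ∪ D) = X \ C ∪ Y \ D := by
  ext v
  have hXY : v ∈ X → v ∉ Y := fun h => disjoint_left.1 hd h
  have hCX : v ∈ C → v ∈ X := fun h => hC h
  have hDY : v ∈ D → v ∈ Y := fun h => hD h
  simp only [mem_union, mem_sdiff]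
  tauto

theorem IsCograph.adj_of_path (hG : IsCograph G) {a b c d : V} (hab : G.Adj a b)
    (hbc : G.Adj b c) (hcd : G.Adj c d) (hac : ¬ G.Adj a c) (hbd : ¬ G.Adj b d) : G.Adj a d := by
  -- Every coincidence among `a, b, c, d` either gives `G.Adj a d` or contradicts `¬ G.Adj a c`.
  by_contra had
  have hac' : a ≠ c := by rintro rfl; exact had hcd
  have hbd' : b ≠ d := by rintro rfl; exact had hab
  have had' : a ≠ d := by rintro rfl; exact hac hcd.symm
  refine hG ⟨⟨![a, b, c, d], fun i j hij => ?_⟩, hab, hbc, hcd, hac, had, hbd⟩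
  fin_cases i <;> fin_cases j <;> simp_all [eq_comm, hab.ne, hbc.ne, hcd.ne]

theorem IsCograph.compl (hG : IsCograph G) : IsCograph Gᶜ := by
  rintro ⟨f, h01, h12, h23, h02, h03, h13⟩
  -- The complement of the path `f 0 - f 1 - f 2 - f 3` is the path `f 1 - f 3 - f 0 - f 2`.
  have hne : ∀ {i j : Fin 4}, i ≠ j → f i ≠ f j := f.injective.ne
  simp only [SimpleGraph.compl_adj, not_and, not_not] at *
  exact h12.2 <| hG.adj_of_path (h13 (hne (by decide))) (h03 (hne (by decide))).symm
    (h02 (hne (by decide))) (fun h => h01.2 h.symm) (fun h => h23.2 h.symm)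

structure IsSplit (G : SimpleGraph V) (S X Y : Finset V) : Prop where
  left_nonempty : X.Nonempty
  right_nonempty : Y.Nonempty
  disjoint : Disjoint X Y
  union_eq : X ∪ Y = S
  noCross_or_allCross : NoCross G X Y ∨ AllCross G X Y

theorem IsSplit.of_compl {S X Y : Finset V} (h : IsSplit Gᶜ S X Y) : IsSplit G S X Y :=
  ⟨h.left_nonempty, h.right_nonempty, h.disjoint, h.union_eq,
    h.noCross_or_allCross.symm.imp (allCross_compl_iff h.disjoint).1
      (noCross_compl_iff h.disjoint).1⟩

theorem IsSplit.left_ssubset {S X Y : Finset V} (h : IsSplit G S X Y) : X ⊂ S :=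
  h.union_eq ▸ left_lt_sup.2 fun hYX =>
    h.right_nonempty.ne_empty (disjoint_self.1 (h.disjoint.mono_left hYX))

theorem IsSplit.right_ssubset {S X Y : Finset V} (h : IsSplit G S X Y) : Y ⊂ S :=
  h.union_eq ▸ right_lt_sup.2 fun hXY =>
    h.left_nonempty.ne_empty (disjoint_self.1 (h.disjoint.mono_right hXY))

theorem AllCross.insert_right {A B : Finset V} {v : V} (h : AllCross G A B)
    (hv : ∀ a ∈ A, G.Adj a v) : AllCross G A (insert v B) := by
  intro a ha w hw
  rcases mem_insert.1 hw with rfl | hw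
  exacts [hv a ha, h a ha w hw]

theorem IsCograph.allCross_neighbors_nonNeighbors (hG : IsCograph G) {A B : Finset V}
    (hx : AllCross G A B) {v a₀ b₀ : V} (ha₀ : a₀ ∈ A) (hb₀ : b₀ ∈ B) (ha₀v : ¬ G.Adj a₀ v)
    (hb₀v : ¬ G.Adj b₀ v) :
    AllCross G ((A ∪ B).filter (G.Adj v)) ((A ∪ B).filter (¬ G.Adj v ·)) := by
  intro u hu w hw
  obtain ⟨hu, hvu⟩ := mem_filter.1 hu
  obtain ⟨hw, hvw⟩ := mem_filter.1 hw
  -- A non-edge `u w` inside one side gives the induced path `w - c - u - v`, where `c` is a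
  -- non-neighbour of `v` on the other side.
  have hcommon : ∀ c, G.Adj w c → G.Adj u c → ¬ G.Adj c v → G.Adj u w := fun c hwc huc hcv => by
    by_contra huw
    exact hvw (hG.adj_of_path hwc huc.symm hvu.symm (fun h => huw h.symm) hcv).symm
  rcases mem_union.1 hu with hu | hu <;> rcases mem_union.1 hw with hw | hw
  · exact hcommon b₀ (hx w hw b₀ hb₀) (hx u hu b₀ hb₀) hb₀v
  · exact hx u hu w hw
  · exact (hx w hw u hu).symm
  · exact hcommon a₀ (hx a₀ ha₀ w hw).symm (hx a₀ ha₀ u hu).symm ha₀v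

theorem IsCograph.exists_isSplit_insert (hG : IsCograph G) {v : V} {A B : Finset V}
    (hv : v ∉ A ∪ B) (hA : A.Nonempty) (hB : B.Nonempty) (hd : Disjoint A B)
    (hx : AllCross G A B) : ∃ X Y, IsSplit G (insert v (A ∪ B)) X Y := by
  have hvA : v ∉ A := fun h => hv (mem_union_left B h)
  have hvB : v ∉ B := fun h => hv (mem_union_right A h)
  by_cases hiso : ∀ w ∈ A ∪ B, ¬ G.Adj v w
  · exact ⟨{v}, A ∪ B, singleton_nonempty v, hA.mono subset_union_left,
      disjoint_singleton_left.2 hv, (insert_eq v _).symm, Or.inl (by simpa [NoCross] using hiso)⟩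
  by_cases hallA : ∀ a ∈ A, G.Adj a v
  · exact ⟨A, insert v B, hA, insert_nonempty v B, disjoint_insert_right.2 ⟨hvA, hd⟩,
      union_insert v A B, Or.inr (hx.insert_right hallA)⟩
  by_cases hallB : ∀ b ∈ B, G.Adj b v
  · exact ⟨B, insert v A, hB, insert_nonempty v A, disjoint_insert_right.2 ⟨hvB, hd.symm⟩,
      by rw [union_insert, union_comm], Or.inr (hx.symm.insert_right hallB)⟩
  push Not at hiso hallA hallB
  obtain ⟨u₀, hu₀, hvu₀⟩ := hiso
  obtain ⟨a₀, ha₀, ha₀v⟩ := hallA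
  obtain ⟨b₀, hb₀, hb₀v⟩ := hallB
  exact ⟨(A ∪ B).filter (G.Adj v), insert v ((A ∪ B).filter (¬ G.Adj v ·)),
    ⟨u₀, mem_filter.2 ⟨hu₀, hvu₀⟩⟩, insert_nonempty _ _,
    disjoint_insert_right.2 ⟨fun h => hv (mem_filter.1 h).1, disjoint_filter_filter_not _ _ _⟩,
    by rw [union_insert, filter_union_filter_not_eq],
    Or.inr ((hG.allCross_neighbors_nonNeighbors hx ha₀ hb₀ ha₀v hb₀v).insert_right
      fun _ hu => (mem_filter.1 hu).2.symm)⟩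

theorem IsCograph.exists_isSplit (hG : IsCograph G) {S : Finset V} (hS : 2 ≤ S.card) :
    ∃ X Y, IsSplit G S X Y := by
  induction S using Finset.induction_on with
  | empty => simp at hS
  | @insert v S hvS ih =>
    rw [card_insert_of_notMem hvS] at hS
    by_cases hS1 : S.card ≤ 1
    · obtain ⟨w, rfl⟩ := card_eq_one.1 (by omega : S.card = 1)
      exact ⟨{v}, {w}, singleton_nonempty v, singleton_nonempty w,
        disjoint_singleton.2 (by simpa using hvS), (insert_eq v {w}).symm,
        (em (G.Adj v w)).symm.imp (by simp [NoCross]) (by simp [AllCross])⟩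
    obtain ⟨X, Y, hX, hY, hd, rfl, hx | hx⟩ := ih (by omega)
    · obtain ⟨X', Y', h⟩ :=
        hG.compl.exists_isSplit_insert hvS hX hY hd ((allCross_compl_iff hd).2 hx)
      exact ⟨X', Y', h.of_compl⟩
    · exact hG.exists_isSplit_insert hvS hX hY hd hx

-- Put about half of `a` on the first side, and more only when `b` cannot take the rest.
theorem exists_add_eq_max_add_max_le {a b s : ℕ} (hs : s ≤ a + b) :
    ∃ s₁ s₂, s₁ + s₂ = s ∧ s₁ ≤ a ∧ s₂ ≤ b ∧
      max (a - s₁) (s₁ - 1) + max (b - s₂) (s₂ - 1) ≤ max (a + b - s) (s - 1) :=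
  ⟨max (s - b) (min s ((a + 1) / 2)), s - max (s - b) (min s ((a + 1) / 2)), by omega, by omega,
    by omega, by omega⟩

-- At `s = 0` the truncated `s - 1` makes the bound `alphaOn G S`, met by `C = ∅`.
def OneExtSplittable (G : SimpleGraph V) (S : Finset V) : Prop :=
  ∀ s ≤ alphaOn G S, ∃ C ⊆ S, OneExtOn G C ∧ alphaOn G C = s ∧
    alphaOn G (S \ C) ≤ max (alphaOn G S - s) (s - 1)

theorem oneExtSplittable_of_card_le_one {S : Finset V} (h : S.card ≤ 1) :
    OneExtSplittable G S := by
  intro s hs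
  rcases Nat.eq_zero_or_pos s with rfl | hs₀
  · exact ⟨∅, empty_subset S, oneExtOn_of_card_le_one (by simp), alphaOn_empty, by simp⟩
  · have := alphaOn_eq_card_of_card_le_one (G := G) h
    exact ⟨S, subset_rfl, oneExtOn_of_card_le_one h, by omega, by simp⟩

theorem OneExtSplittable.union_of_noCross {X Y : Finset V} (hX : OneExtSplittable G X)
    (hY : OneExtSplittable G Y) (hd : Disjoint X Y) (hx : NoCross G X Y) :
    OneExtSplittable G (X ∪ Y) := by
  intro s hs
  rw [alphaOn_union_of_noCross hd hx] at hs ⊢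
  obtain ⟨s₁, s₂, rfl, hs₁, hs₂, hcost⟩ := exists_add_eq_max_add_max_le hs
  obtain ⟨C, hCX, hC, hCα, hCrest⟩ := hX s₁ hs₁
  obtain ⟨D, hDY, hD, hDα, hDrest⟩ := hY s₂ hs₂
  have hdCD := hd.mono hCX hDY
  have hxCD := hx.mono hCX hDY
  refine ⟨C ∪ D, union_subset_union hCX hDY, hC.union_of_noCross hD hdCD hxCD,
    by rw [alphaOn_union_of_noCross hdCD hxCD, hCα, hDα], ?_⟩
  rw [union_sdiff_union_of_subset hCX hDY hd, alphaOn_union_of_noCross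
    (hd.mono sdiff_subset sdiff_subset) (hx.mono sdiff_subset sdiff_subset)]
  exact (add_le_add hCrest hDrest).trans hcost

theorem OneExtSplittable.union_of_allCross {X Y : Finset V} (hX : OneExtSplittable G X)
    (hY : OneExtSplittable G Y) (hx : AllCross G X Y) : OneExtSplittable G (X ∪ Y) := by
  wlog hYX : alphaOn G Y ≤ alphaOn G X generalizing X Y
  · rw [union_comm]
    exact this hY hX hx.symm (by omega)
  intro s hs
  rw [alphaOn_union_of_allCross hx, max_eq_left hYX] at hs ⊢
  obtain ⟨C, hCX, hC, hCα, hCrest⟩ := hX s hs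
  by_cases hsY : s ≤ alphaOn G Y
  · obtain ⟨D, hDY, hD, hDα, hDrest⟩ := hY s hsY
    have hxCD := hx.mono hCX hDY
    refine ⟨C ∪ D, union_subset_union hCX hDY, hC.union_of_allCross hD hxCD (hCα.trans hDα.symm),
      by rw [alphaOn_union_of_allCross hxCD, hCα, hDα, max_self], ?_⟩
    rw [union_sdiff_union_of_subset hCX hDY hx.disjoint,
      alphaOn_union_of_allCross (hx.mono sdiff_subset sdiff_subset)]
    omega
  · refine ⟨C, hCX.trans subset_union_left, hC, hCα, ?_⟩
    rw [union_sdiff_distrib, sdiff_eq_self_of_disjoint (hx.disjoint.mono_left hCX).symm,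
      alphaOn_union_of_allCross (hx.mono sdiff_subset subset_rfl)]
    omega

theorem IsCograph.oneExtSplittable (hG : IsCograph G) (S : Finset V) : OneExtSplittable G S := by
  induction S using Finset.strongInduction with
  | H S ih =>
    by_cases hS : S.card ≤ 1
    · exact oneExtSplittable_of_card_le_one hS
    obtain ⟨X, Y, h⟩ := hG.exists_isSplit (by omega : 2 ≤ S.card)
    have hX := ih X h.left_ssubset
    have hY := ih Y h.right_ssubset
    rw [← h.union_eq]
    rcases h.noCross_or_allCross with hx | hx
    exacts [hX.union_of_noCross hY h.disjoint hx, hX.union_of_allCross hY hx]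

theorem IsCograph.exists_coloring (hG : IsCograph G) (k : ℕ) (S : Finset V)
    (hS : alphaOn G S < 2 ^ k) :
    ∃ c : V → ℕ, (∀ v ∈ S, c v < k) ∧ ∀ i, OneExtOn G (S.filter (c · = i)) := by
  induction k generalizing S with
  | zero =>
    obtain rfl : S = ∅ := not_nonempty_iff_eq_empty.1 fun h => by
      have := one_le_alphaOn (G := G) h
      simp at hS
      omega
    exact ⟨0, by simp, fun i => by simpa using oneExtOn_of_card_le_one (G := G) (by simp)⟩
  | succ k ih =>
    obtain ⟨C, hCS, hC, -, hrest⟩ :=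
      hG.oneExtSplittable S (min (alphaOn G S) (2 ^ k)) (min_le_left _ _)
    obtain ⟨c, hc, hcls⟩ := ih (S \ C) (by rw [pow_succ] at hS; omega)
    refine ⟨fun v => if v ∈ C then k else c v, fun v hv => ?_, fun i => ?_⟩
    · dsimp only
      split_ifs with hvC
      · exact k.lt_succ_self
      · exact (hc v (mem_sdiff.2 ⟨hv, hvC⟩)).trans k.lt_succ_self
    · by_cases hik : i = k
      · convert hC using 1
        ext v
        by_cases hvC : v ∈ C
        · simp [hvC, hCS hvC, hik]
        · simpa [hvC, hik] using fun hvS => (hc v (mem_sdiff.2 ⟨hvS, hvC⟩)).ne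
      · convert hcls i using 1
        ext v
        by_cases hvC : v ∈ C <;> simp [hvC, Ne.symm hik]

theorem indepF_map_iff {W : Type*} (f : W ↪ V) (T : Finset W) :
    IndepF G (T.map f) ↔ IndepF (G.comap f) T := by
  simp [IndepF]

theorem alphaOn_map {W : Type*} (f : W ↪ V) (T : Finset W) :
    alphaOn G (T.map f) = alphaOn (G.comap f) T := by
  refine le_antisymm ?_ ?_
  · obtain ⟨I, hI, hIi, hcard⟩ := exists_indepF_card_eq_alphaOn G (T.map f)
    obtain ⟨J, hJ, rfl⟩ := subset_map_iff.1 hI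
    rw [← hcard, card_map]
    exact card_le_alphaOn hJ ((indepF_map_iff f J).1 hIi)
  · obtain ⟨J, hJ, hJi, hcard⟩ := exists_indepF_card_eq_alphaOn (G.comap f) T
    rw [← hcard, ← card_map f]
    exact card_le_alphaOn (map_subset_map.2 hJ) ((indepF_map_iff f J).2 hJi)

theorem OneExtOn.comap {W : Type*} (f : W ↪ V) {T : Finset W} (h : OneExtOn G (T.map f)) :
    OneExtOn (G.comap f) T := by
  intro v hv
  obtain ⟨I, hI, hvI, hIi, hcard⟩ := h (f v) (mem_map_of_mem f hv)
  obtain ⟨J, hJ, rfl⟩ := subset_map_iff.1 hI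
  exact ⟨J, hJ, (mem_map' f).1 hvI, (indepF_map_iff f J).1 hIi,
    by rw [← card_map f, hcard, alphaOn_map]⟩

theorem OneExtOn.oneExt_induce [Fintype V] {s : Set V} [Fintype s]
    (h : OneExtOn G (univ.filter (· ∈ s))) : OneExt (G.induce s) := fun v => by
  rw [← univ_map_subtype] at h
  obtain ⟨T, -, hvT, hT, hcard⟩ := h.comap _ v (mem_univ v)
  exact ⟨T, hvT, hT, hcard⟩

theorem cograph_chiOneExt_le_log_general [Fintype V] (G : SimpleGraph V) (hG : IsCograph G) :
    (chiOneExt G : ℝ) ≤ Real.logb 2 (alphaN G) + 1 := by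
  obtain ⟨c, hc, hcls⟩ := hG.exists_coloring (Nat.log 2 (alphaN G) + 1) univ
    (Nat.lt_pow_succ_log_self one_lt_two _)
  have hchi : chiOneExt G ≤ Nat.log 2 (alphaN G) + 1 := by
    refine Nat.sInf_le ⟨fun v => ⟨c v, hc v (mem_univ v)⟩, fun i => OneExtOn.oneExt_induce ?_⟩
    convert hcls i using 2
    simp [Fin.ext_iff]
  calc (chiOneExt G : ℝ) ≤ Nat.log 2 (alphaN G) + 1 := by exact_mod_cast hchi
    _ ≤ Real.logb 2 (alphaN G) + 1 := by gcongr; exact_mod_cast Real.natLog_le_logb _ _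

/-- For a nonempty cograph, the 1-extendable chromatic number is at most
log2 of the independence number, plus one. -/
theorem cograph_chiOneExt_le_log [Fintype V] (G : SimpleGraph V) (hG : IsCograph G)
    (hn : 1 ≤ Fintype.card V) :
    (chiOneExt G : ℝ) ≤ Real.logb 2 (alphaN G) + 1 :=
  cograph_chiOneExt_le_log_general G hG
end
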